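/- For j with 2 ≤ j ≤ 8 and ξ ≥ λ_j, the number ξ_j defined by (ξ_j^j − ξ_j^{j−1})/log ξ_j = ξ/log ξ (with ξ_j > 1) satisfies ξ_j ≤ (ξ/j)^{1/j}, where λ₂=80, λ₃=586, λ₄=6381, λ₅=89017, λ₆=1499750, λ₇=29511244, λ₈=663184075. -/

import Mathlib

/-!
`f t = (t ^ j - t ^ (j - 1)) / log t` is strictly increasing on `(1, ∞)`, being `t ^ (j - 1)` times
the reciprocal of the secant slope of the concave function `log` at `1`. Hence it suffices to show
`f u ≥ ξ / log ξ` for `u = (ξ / j) ^ (1 / j)`; as `ξ = j * u ^ j`, this reduces to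
`log ξ ≤ u * log j`, i.e. `log ξ / ξ ^ (1 / j) ≤ log j / j ^ (1 / j)`. The left side decreases for
`ξ ≥ exp j`, so it is enough to check the inequality at `ξ = λ_j`, which is done with a rational
`p / q` lying between `log λ_j / log j` and `(λ_j / j) ^ (1 / j)`.
-/

def lamJ : ℕ → ℝ
  | 2 => 80
  | 3 => 586
  | 4 => 6381
  | 5 => 89017
  | 6 => 1499750
  | 7 => 29511244
  | 8 => 663184075
  | _ => 0

open Real Set

lemma sub_one_div_log_strictMonoOn : StrictMonoOn (fun t : ℝ => (t - 1) / log t) (Ioi 1) := by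
  intro a (ha : 1 < a) b (hb : 1 < b) hab
  have hslope := strictConcaveOn_log_Ioi.secant_strict_mono (mem_Ioi.2 one_pos)
    (mem_Ioi.2 (zero_lt_one.trans ha)) (mem_Ioi.2 (zero_lt_one.trans hb)) ha.ne' hb.ne' hab
  simp only [log_one, sub_zero] at hslope
  rw [div_lt_div_iff₀ (by linarith) (by linarith)] at hslope
  show (a - 1) / log a < (b - 1) / log b
  rw [div_lt_div_iff₀ (log_pos ha) (log_pos hb)]
  linarith

lemma pow_sub_pow_pred_div_log_strictMonoOn {j : ℕ} (hj : 1 ≤ j) :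
    StrictMonoOn (fun t : ℝ => (t ^ j - t ^ (j - 1)) / log t) (Ioi 1) := by
  have hfactor (t : ℝ) : (t ^ j - t ^ (j - 1)) / log t = t ^ (j - 1) * ((t - 1) / log t) := by
    rw [← pow_sub_one_mul (by omega) t]
    ring
  intro a (ha : 1 < a) b (hb : 1 < b) hab
  simp only [hfactor]
  exact mul_lt_mul' (pow_le_pow_left₀ (by linarith) hab.le _)
    (sub_one_div_log_strictMonoOn ha hb hab) (div_pos (by linarith) (log_pos ha)).le
    (pow_pos (by linarith) _)

lemma div_log_le_pow_sub_pow_pred_div_log {j : ℕ} (hj : 1 ≤ j) {u x : ℝ} (hu : 1 < u)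
    (hx : x = j * u ^ j) (h : log x ≤ u * log j) :
    x / log x ≤ (u ^ j - u ^ (j - 1)) / log u := by
  have hpow : u ^ (j - 1) * u = u ^ j := pow_sub_one_mul (by omega) u
  have hlj : 0 ≤ log (j : ℝ) := log_nonneg (Nat.one_le_cast.2 hj)
  have hlu := log_pos hu
  have hlx : log x = log j + j * log u := by
    rw [hx, log_mul (by positivity) (by positivity), log_pow]
  rw [hlx] at h ⊢
  rw [div_le_div_iff₀ (by positivity) hlu, hx, ← hpow]
  nlinarith [mul_le_mul_of_nonneg_left h (pow_nonneg (by linarith : (0 : ℝ) ≤ u) (j - 1))]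

lemma log_le_rpow_mul_log_of_le {n a x : ℝ} (hn : 0 < n) (ha : exp n ≤ a) (hax : a ≤ x)
    (h : log a ≤ (a / n) ^ (1 / n) * log n) : log x ≤ (x / n) ^ (1 / n) * log n := by
  have hrescale {y : ℝ} (hy : 0 < y) :
      log y ≤ (y / n) ^ (1 / n) * log n ↔ log y / y ^ (1 / n) ≤ log n / n ^ (1 / n) := by
    rw [div_rpow hy.le hn.le, div_mul_eq_mul_div, le_div_iff₀ (by positivity),
      div_le_div_iff₀ (by positivity) (by positivity), mul_comm (log n)]
  have hanti := log_div_self_rpow_antitoneOn (one_div_pos.2 hn)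
  rw [inv_div, div_one] at hanti
  have ha0 : 0 < a := (exp_pos n).trans_le ha
  rw [hrescale (ha0.trans_le hax)]
  rw [hrescale ha0] at h
  exact (hanti ha (ha.trans hax) hax).trans h

lemma log_le_rpow_mul_log_of_pow_le {l n p q : ℕ} (hl : 0 < l) (hn : n ≠ 0) (hq : q ≠ 0)
    (hlog : l ^ q ≤ n ^ p) (hroot : n * p ^ n ≤ l * q ^ n) :
    log l ≤ ((l : ℝ) / n) ^ ((1 : ℝ) / n) * log n := by
  have hln : 0 ≤ log (n : ℝ) := log_nonneg (Nat.one_le_cast.2 (by omega))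
  have hq' : (0 : ℝ) < q := by positivity
  have hratio : log l ≤ p / q * log n := by
    have : (q : ℝ) * log l ≤ p * log n := by
      rw [← log_pow, ← log_pow]
      exact log_le_log (by positivity) (by exact_mod_cast hlog)
    rw [div_mul_eq_mul_div, le_div_iff₀ hq']
    linarith
  have hroot' : (p / q : ℝ) ≤ ((l : ℝ) / n) ^ ((1 : ℝ) / n) := by
    rw [one_div, le_rpow_inv_iff_of_pos (by positivity) (by positivity) (by positivity),
      rpow_natCast, div_pow, div_le_div_iff₀ (by positivity) (by positivity)]
    exact_mod_cast (by linarith [hroot] : p ^ n * n ≤ l * q ^ n)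
  calc log (l : ℝ) ≤ p / q * log n := hratio
    _ ≤ ((l : ℝ) / n) ^ ((1 : ℝ) / n) * log n := by gcongr

lemma exp_le_lamJ {j : ℕ} (hj1 : 2 ≤ j) (hj2 : j ≤ 8) : exp j ≤ lamJ j := by
  calc exp j = exp 1 ^ j := by rw [← exp_nat_mul, mul_one]
    _ ≤ 3 ^ j := by gcongr; exact exp_one_lt_d9.le.trans (by norm_num)
    _ ≤ lamJ j := by interval_cases j <;> norm_num [lamJ]

lemma log_lamJ_le {j : ℕ} (hj1 : 2 ≤ j) (hj2 : j ≤ 8) :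
    log (lamJ j) ≤ (lamJ j / j) ^ ((1 : ℝ) / j) * log j := by
  interval_cases j
  · simpa [lamJ] using
      log_le_rpow_mul_log_of_pow_le (l := 80) (n := 2) (p := 196) (q := 31)
        (by norm_num) (by norm_num) (by norm_num) (by decide +kernel) (by norm_num)
  · simpa [lamJ] using
      log_le_rpow_mul_log_of_pow_le (l := 586) (n := 3) (p := 557) (q := 96)
        (by norm_num) (by norm_num) (by norm_num) (by decide +kernel) (by norm_num)
  · simpa [lamJ] using
      log_le_rpow_mul_log_of_pow_le (l := 6381) (n := 4) (p := 1245) (q := 197)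
        (by norm_num) (by norm_num) (by norm_num) (by decide +kernel) (by norm_num)
  · simpa [lamJ] using
      log_le_rpow_mul_log_of_pow_le (l := 89017) (n := 5) (p := 11613) (q := 1640)
        (by norm_num) (by norm_num) (by norm_num) (by decide +kernel) (by norm_num)
  · simpa [lamJ] using
      log_le_rpow_mul_log_of_pow_le (l := 1499750) (n := 6) (p := 14564) (q := 1835)
        (by norm_num) (by norm_num) (by norm_num) (by decide +kernel) (by norm_num)
  · simpa [lamJ] using
      log_le_rpow_mul_log_of_pow_le (l := 29511244) (n := 7) (p := 113071) (q := 12792)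
        (by norm_num) (by norm_num) (by norm_num) (by decide +kernel) (by norm_num)
  · simpa [lamJ] using
      log_le_rpow_mul_log_of_pow_le (l := 663184075) (n := 8) (p := 154583) (q := 15825)
        (by norm_num) (by norm_num) (by norm_num) (by decide +kernel) (by norm_num)

theorem stmt10 (j : ℕ) (hj1 : 2 ≤ j) (hj2 : j ≤ 8) (ξ : ℝ) (hξ : lamJ j ≤ ξ)
    (ξj : ℝ) (hξj : 1 < ξj)
    (heq : (ξj ^ j - ξj ^ (j - 1)) / Real.log ξj = ξ / Real.log ξ) :
    ξj ≤ (ξ / j) ^ ((1 : ℝ) / j) := by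
  have hj : (0 : ℝ) < j := Nat.cast_pos.2 (by omega)
  have hexp : exp j ≤ ξ := (exp_le_lamJ hj1 hj2).trans hξ
  have hjξ : (j : ℝ) < ξ := by linarith [add_one_le_exp (j : ℝ)]
  set u := (ξ / j) ^ ((1 : ℝ) / j) with hu_def
  have hξu : ξ = j * u ^ j := by
    rw [hu_def, one_div, rpow_inv_natCast_pow (div_pos (hj.trans hjξ) hj).le (by omega)]
    field_simp
  have hu : 1 < u := one_lt_rpow ((one_lt_div hj).2 hjξ) (by positivity)
  have hkey : log ξ ≤ u * log j :=
    log_le_rpow_mul_log_of_le hj (exp_le_lamJ hj1 hj2) hξ (log_lamJ_le hj1 hj2)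
  refine ((pow_sub_pow_pred_div_log_strictMonoOn (j := j) (by omega)).le_iff_le hξj hu).1 ?_
  rw [heq]
  exact div_log_le_pow_sub_pow_pred_div_log (by omega) hu hξu hkey
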